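/- Let u : R^{2n} → R be C^3 with |∇^ε_u u| bounded, and suppose u solves L_ε u = 0 in Ω, where L_ε u = Σ_{i=1}^{2n} X^ε_{i,u}(X^ε_{i,u}u/√(1+|∇^ε_u u|²)). Then for each k ≤ 2n-1, the function z = X^ε_{k,u}u satisfies Σ_{i,j} X^ε_{i,u}( (a_{ij}(∇^ε_u u)/√(1+|∇^ε_u u|²)) X^ε_{j,u} z ) = -Σ_i [X^ε_{k,u}, X^ε_{i,u}]( X^ε_{i,u}u/√(1+|∇^ε_u u|²) ) - Σ_{i,j} X^ε_{i,u}( (a_{ij}(∇^ε_u u)/√(1+|∇^ε_u u|²)) [X^ε_{k,u}, X^ε_{j,u}]u ) pointwise in Ω. -/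

import Mathlib

open scoped BigOperators

/-- Partial derivative `∂_i f (x)` on `ℝ^N`. -/
noncomputable def pd {N : ℕ} (i : Fin N) (f : EuclideanSpace ℝ (Fin N) → ℝ)
    (x : EuclideanSpace ℝ (Fin N)) : ℝ :=
  fderiv ℝ f x (EuclideanSpace.single i 1)

/-- The vector fields `X^ε_{i,u}` of the Riemannian approximation on the
intrinsic-graph domain `ℝ^{2n}` (0-based indices: `X_i = ∂_i` for `i < n-1`,
`X_i = ∂_i - x_{i-(n-1)}∂_{2n}` for `n-1 ≤ i < 2n-2`,
`X_{2n-2} = ∂_{2n-2} + u∂_{2n}`, `X_{2n-1} = ε∂_{2n}`). -/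
noncomputable def Xop (n : ℕ) (hn : 1 ≤ n) (ε : ℝ)
    (u : EuclideanSpace ℝ (Fin (2*n)) → ℝ) (i : Fin (2*n))
    (f : EuclideanSpace ℝ (Fin (2*n)) → ℝ) (x : EuclideanSpace ℝ (Fin (2*n))) : ℝ :=
  if (i : ℕ) < n - 1 then pd i f x
  else if (i : ℕ) < 2*n - 2 then
    pd i f x - x ⟨(i : ℕ) - (n - 1), by have := i.isLt; omega⟩ * pd ⟨2*n - 1, by omega⟩ f x
  else if (i : ℕ) = 2*n - 2 then
    pd i f x + u x * pd ⟨2*n - 1, by omega⟩ f x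
  else ε * pd ⟨2*n - 1, by omega⟩ f x

/-- The squared length `|∇^ε_u f|²` of the intrinsic gradient. -/
noncomputable def gradSq (n : ℕ) (hn : 1 ≤ n) (ε : ℝ)
    (u f : EuclideanSpace ℝ (Fin (2*n)) → ℝ) (x : EuclideanSpace ℝ (Fin (2*n))) : ℝ :=
  ∑ i : Fin (2*n), (Xop n hn ε u i f x) ^ 2

/-- `a_{ij}(p) = δ_{ij} - p_i p_j/(1+|p|²)` for `p : Fin m → ℝ`. -/
noncomputable def aCoef {m : ℕ} (p : Fin m → ℝ) (i j : Fin m) : ℝ :=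
  (if i = j then 1 else 0) - p i * p j / (1 + ∑ k, (p k) ^ 2)

/-- The approximating minimal surface operator
`L_ε u = Σ_i X^ε_{i,u}( X^ε_{i,u}u / √(1+|∇^ε_u u|²) )`. -/
noncomputable def Lop (n : ℕ) (hn : 1 ≤ n) (ε : ℝ)
    (u : EuclideanSpace ℝ (Fin (2*n)) → ℝ) (x : EuclideanSpace ℝ (Fin (2*n))) : ℝ :=
  ∑ i : Fin (2*n),
    Xop n hn ε u i
      (fun y => Xop n hn ε u i u y / Real.sqrt (1 + gradSq n hn ε u u y)) x

/-- The formal adjoint `(X^ε_{i,u})^* = -X^ε_{i,u} - δ_{i,2n-1}(∂_{2n}u)`. -/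
noncomputable def XopStar (n : ℕ) (hn : 1 ≤ n) (ε : ℝ)
    (u : EuclideanSpace ℝ (Fin (2*n)) → ℝ) (i : Fin (2*n))
    (f : EuclideanSpace ℝ (Fin (2*n)) → ℝ) (x : EuclideanSpace ℝ (Fin (2*n))) : ℝ :=
  -(Xop n hn ε u i f x)
    - (if (i : ℕ) = 2*n - 2 then pd ⟨2*n - 1, by omega⟩ u x * f x else 0)

/-! Each `X^ε_{i,u}` is the derivative along a `C²` vector field, hence a derivation. For
`v_i = X_i u / √(1 + |∇u|²)` the chain rule gives
`X_k v_i = Σ_j a_ij(∇u) / √(1 + |∇u|²) · X_k X_j u`,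
because `∂(p_i / √(1 + |p|²)) / ∂p_j = a_ij(p) / √(1 + |p|²)`. Writing
`X_k X_j u = X_j z + [X_k, X_j] u` and applying `X_i`, the left-hand side plus the second sum
becomes `Σ_i X_i X_k v_i`, while `Σ_i X_k X_i v_i = X_k (L_ε u)` vanishes on the open set `Ω`. -/

section AreaIntegrand

variable {E : Type*} [NormedAddCommGroup E] [NormedSpace ℝ E] {m : ℕ} {p : Fin m → E → ℝ}
  {r : WithTop ℕ∞}

lemma one_add_sum_sq_pos (P : Fin m → ℝ) : 0 < 1 + ∑ k, P k ^ 2 := by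
  positivity

lemma contDiff_sqrt_one_add_sum_sq (hp : ∀ k, ContDiff ℝ r (p k)) :
    ContDiff ℝ r fun y => √(1 + ∑ k, p k y ^ 2) :=
  (contDiff_const.add (ContDiff.sum fun k _ => (hp k).pow 2)).sqrt
    fun y => (one_add_sum_sq_pos fun k => p k y).ne'

lemma contDiff_div_sqrt_one_add_sum_sq (hp : ∀ k, ContDiff ℝ r (p k)) (i : Fin m) :
    ContDiff ℝ r fun y => p i y / √(1 + ∑ k, p k y ^ 2) :=
  (hp i).div (contDiff_sqrt_one_add_sum_sq hp)
    fun y => (Real.sqrt_pos.mpr (one_add_sum_sq_pos fun k => p k y)).ne'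

lemma contDiff_aCoef_div_sqrt_one_add_sum_sq (hp : ∀ k, ContDiff ℝ r (p k)) (i j : Fin m) :
    ContDiff ℝ r fun y => aCoef (fun l => p l y) i j / √(1 + ∑ k, p k y ^ 2) := by
  unfold aCoef
  exact (contDiff_const.sub (((hp i).mul (hp j)).div
    (contDiff_const.add (ContDiff.sum fun k _ => (hp k).pow 2))
    fun y => (one_add_sum_sq_pos fun k => p k y).ne')).div (contDiff_sqrt_one_add_sum_sq hp)
    fun y => (Real.sqrt_pos.mpr (one_add_sum_sq_pos fun k => p k y)).ne'

lemma sum_aCoef_mul (P d : Fin m → ℝ) (i : Fin m) :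
    ∑ j, aCoef P i j * d j = d i - P i * (∑ j, P j * d j) / (1 + ∑ k, P k ^ 2) := by
  simp only [aCoef, sub_mul, ite_mul, one_mul, zero_mul, Finset.sum_sub_distrib, Finset.sum_ite_eq,
    Finset.mem_univ, if_true, Finset.mul_sum, Finset.sum_div]
  exact congrArg _ (Finset.sum_congr rfl fun j _ => by ring)

lemma fderiv_div_sqrt_one_add_sum_sq {y : E} (hp : ∀ k, DifferentiableAt ℝ (p k) y)
    (i : Fin m) (v : E) :
    fderiv ℝ (fun w => p i w / √(1 + ∑ k, p k w ^ 2)) y v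
      = ∑ j, aCoef (fun l => p l y) i j / √(1 + ∑ k, p k y ^ 2) * fderiv ℝ (p j) y v := by
  have hQ : 0 < 1 + ∑ k, p k y ^ 2 := one_add_sum_sq_pos _
  have hW : 0 < √(1 + ∑ k, p k y ^ 2) := Real.sqrt_pos.mpr hQ
  have hQd : HasFDerivAt (fun w => 1 + ∑ k, p k w ^ 2)
      (∑ k, ((2 : ℕ) • p k y ^ (2 - 1)) • fderiv ℝ (p k) y) y :=
    (HasFDerivAt.fun_sum fun k _ => (hp k).hasFDerivAt.pow 2).const_add 1
  have hquot : HasFDerivAt (fun w => p i w * (√(1 + ∑ k, p k w ^ 2))⁻¹) _ y :=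
    (hp i).hasFDerivAt.mul ((hasDerivAt_inv hW.ne').comp_hasFDerivAt y (hQd.sqrt hQ.ne'))
  simp_rw [div_eq_mul_inv (p i _), hquot.fderiv, div_mul_eq_mul_div, ← Finset.sum_div,
    sum_aCoef_mul]
  simp only [add_apply, smul_apply, sum_apply, smul_eq_mul, nsmul_eq_mul]
  rw [Real.sq_sqrt hQ.le]
  field_simp
  simp only [Nat.cast_ofNat, Nat.add_one_sub_one, pow_one, mul_assoc, ← Finset.mul_sum]
  ring

end AreaIntegrand

noncomputable def Xvec (n : ℕ) (hn : 1 ≤ n) (ε : ℝ)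
    (u : EuclideanSpace ℝ (Fin (2*n)) → ℝ) (i : Fin (2*n))
    (x : EuclideanSpace ℝ (Fin (2*n))) : EuclideanSpace ℝ (Fin (2*n)) :=
  if (i : ℕ) < n - 1 then EuclideanSpace.single i 1
  else if (i : ℕ) < 2*n - 2 then
    EuclideanSpace.single i 1
      - x ⟨(i : ℕ) - (n - 1), by have := i.isLt; omega⟩
        • EuclideanSpace.single ⟨2*n - 1, by omega⟩ 1
  else if (i : ℕ) = 2*n - 2 then
    EuclideanSpace.single i 1 + u x • EuclideanSpace.single ⟨2*n - 1, by omega⟩ 1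
  else ε • EuclideanSpace.single ⟨2*n - 1, by omega⟩ 1

section VectorFields

variable {n : ℕ} {hn : 1 ≤ n} {ε : ℝ} {u f g : EuclideanSpace ℝ (Fin (2*n)) → ℝ}
  {x : EuclideanSpace ℝ (Fin (2*n))} {i : Fin (2*n)} {r : WithTop ℕ∞}

lemma Xop_eq_fderiv : Xop n hn ε u i f x = fderiv ℝ f x (Xvec n hn ε u i x) := by
  unfold Xop Xvec pd
  split_ifs <;> simp [smul_eq_mul]

lemma contDiff_Xvec (hu : ContDiff ℝ r u) (i : Fin (2*n)) : ContDiff ℝ r (Xvec n hn ε u i) := by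
  unfold Xvec
  split_ifs
  · exact contDiff_const
  · exact contDiff_const.sub ((contDiff_piLp_apply (p := 2)).fun_smul contDiff_const)
  · exact contDiff_const.add (hu.fun_smul contDiff_const)
  · exact contDiff_const

lemma contDiff_Xop (hu : ContDiff ℝ r u) (hf : ContDiff ℝ (r + 1) f) (i : Fin (2*n)) :
    ContDiff ℝ r (Xop n hn ε u i f) := by
  have : Xop n hn ε u i f = fun y => fderiv ℝ f y (Xvec n hn ε u i y) :=
    funext fun _ => Xop_eq_fderiv
  rw [this]
  exact (hf.fderiv_right le_rfl).clm_apply (contDiff_Xvec hu i)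

lemma Xop_congr (h : ∀ y, f y = g y) : Xop n hn ε u i f x = Xop n hn ε u i g x := by
  rw [funext h]

lemma Xop_add (hf : DifferentiableAt ℝ f x) (hg : DifferentiableAt ℝ g x) :
    Xop n hn ε u i (fun y => f y + g y) x = Xop n hn ε u i f x + Xop n hn ε u i g x := by
  simp only [Xop_eq_fderiv, fderiv_fun_add hf hg, add_apply]

lemma Xop_sum {ι : Type*} (s : Finset ι) {F : ι → EuclideanSpace ℝ (Fin (2*n)) → ℝ}
    (hF : ∀ j ∈ s, DifferentiableAt ℝ (F j) x) :
    Xop n hn ε u i (fun y => ∑ j ∈ s, F j y) x = ∑ j ∈ s, Xop n hn ε u i (F j) x := by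
  simp only [Xop_eq_fderiv, fderiv_fun_sum hF, sum_apply]

lemma Xop_sum_mul_add_sum_mul_sub {ι : Type*} [Fintype ι]
    {c A B : ι → EuclideanSpace ℝ (Fin (2*n)) → ℝ} (hc : ∀ j, DifferentiableAt ℝ (c j) x)
    (hA : ∀ j, DifferentiableAt ℝ (A j) x) (hB : ∀ j, DifferentiableAt ℝ (B j) x) :
    ∑ j, Xop n hn ε u i (fun y => c j y * A j y) x
        + ∑ j, Xop n hn ε u i (fun y => c j y * (B j y - A j y)) x
      = Xop n hn ε u i (fun y => ∑ j, c j y * B j y) x := by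
  rw [← Finset.sum_add_distrib,
    Xop_sum (F := fun j y => c j y * B j y) _ fun j _ => (hc j).mul (hB j)]
  refine Finset.sum_congr rfl fun j _ => ?_
  exact (Xop_add ((hc j).mul (hA j)) ((hc j).mul ((hB j).sub (hA j)))).symm.trans
    (Xop_congr fun y => by simp only [Pi.mul_apply, Pi.sub_apply]; ring)

lemma Xop_eq_zero_of_eventuallyEq_zero (hf : f =ᶠ[nhds x] 0) : Xop n hn ε u i f x = 0 := by
  rw [Xop_eq_fderiv, hf.fderiv_eq, fderiv_zero]; rfl

end VectorFields

section Solution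

variable {n : ℕ} {hn : 1 ≤ n} {ε : ℝ} {u : EuclideanSpace ℝ (Fin (2*n)) → ℝ}

lemma contDiff_Xop_self (hu : ContDiff ℝ 3 u) (i : Fin (2*n)) : ContDiff ℝ 2 (Xop n hn ε u i u) :=
  contDiff_Xop (hu.of_le (by norm_num)) hu i

lemma differentiable_Xop_Xop_self (hu : ContDiff ℝ 3 u) (i j : Fin (2*n)) :
    Differentiable ℝ (Xop n hn ε u i (Xop n hn ε u j u)) :=
  (contDiff_Xop (hu.of_le (by norm_num)) (contDiff_Xop_self hu j) i).differentiable one_ne_zero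

lemma Xop_div_sqrt_one_add_gradSq (hu : ContDiff ℝ 3 u) (i k : Fin (2*n))
    (y : EuclideanSpace ℝ (Fin (2*n))) :
    Xop n hn ε u k (fun w => Xop n hn ε u i u w / √(1 + gradSq n hn ε u u w)) y
      = ∑ j, aCoef (fun l => Xop n hn ε u l u y) i j / √(1 + gradSq n hn ε u u y)
          * Xop n hn ε u k (fun w => Xop n hn ε u j u w) y := by
  rw [Xop_eq_fderiv]
  refine (fderiv_div_sqrt_one_add_sum_sq (p := fun l => Xop n hn ε u l u)
    (fun l => (contDiff_Xop_self hu l).differentiable (by norm_num) y) i _).trans ?_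
  exact Finset.sum_congr rfl fun j _ => by rw [Xop_eq_fderiv (i := k)]; rfl

lemma Xop_Xop_div_sqrt_one_add_gradSq (hu : ContDiff ℝ 3 u) (i k : Fin (2*n))
    (x : EuclideanSpace ℝ (Fin (2*n))) :
    Xop n hn ε u i
        (fun y => Xop n hn ε u k (fun w => Xop n hn ε u i u w / √(1 + gradSq n hn ε u u w)) y) x
      = ∑ j, Xop n hn ε u i (fun y => aCoef (fun l => Xop n hn ε u l u y) i j
            / √(1 + gradSq n hn ε u u y) * Xop n hn ε u j (fun w => Xop n hn ε u k u w) y) x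
        + ∑ j, Xop n hn ε u i (fun y => aCoef (fun l => Xop n hn ε u l u y) i j
            / √(1 + gradSq n hn ε u u y) * (Xop n hn ε u k (fun w => Xop n hn ε u j u w) y
              - Xop n hn ε u j (fun w => Xop n hn ε u k u w) y)) x := by
  have hXX (a b : Fin (2*n)) := differentiable_Xop_Xop_self (hn := hn) (ε := ε) hu a b x
  refine (Xop_congr fun y => Xop_div_sqrt_one_add_gradSq hu i k y).trans ?_
  exact (Xop_sum_mul_add_sum_mul_sub (fun j => (contDiff_aCoef_div_sqrt_one_add_sum_sq
    (contDiff_Xop_self hu) i j).differentiable (by norm_num) x) (fun j => hXX j k)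
    (fun j => hXX k j)).symm

lemma sum_Xop_Xop_div_sqrt_eq_zero (hu : ContDiff ℝ 3 u)
    {Ω : Set (EuclideanSpace ℝ (Fin (2*n)))} (hΩ : IsOpen Ω) (hsol : ∀ x ∈ Ω, Lop n hn ε u x = 0)
    (k : Fin (2*n)) {x : EuclideanSpace ℝ (Fin (2*n))} (hx : x ∈ Ω) :
    ∑ i, Xop n hn ε u k
        (fun y => Xop n hn ε u i (fun w => Xop n hn ε u i u w / √(1 + gradSq n hn ε u u w)) y) x
      = 0 := by
  have hv :=
    contDiff_div_sqrt_one_add_sum_sq (p := fun l => Xop n hn ε u l u) (contDiff_Xop_self hu)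
  rw [← Xop_sum (F := fun i => Xop n hn ε u i
      (fun w => Xop n hn ε u i u w / √(1 + gradSq n hn ε u u w))) _ fun i _ =>
    (contDiff_Xop (hu.of_le (by norm_num)) (hv i) i).differentiable one_ne_zero x]
  refine Xop_eq_zero_of_eventuallyEq_zero ?_
  filter_upwards [hΩ.mem_nhds hx] with y hy using hsol y hy

end Solution

theorem stmt11_general {n : ℕ} (hn : 1 ≤ n) (ε : ℝ)
    (Ω : Set (EuclideanSpace ℝ (Fin (2*n)))) (hΩ : IsOpen Ω)
    (u : EuclideanSpace ℝ (Fin (2*n)) → ℝ) (hu : ContDiff ℝ 3 u)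
    (hsol : ∀ x ∈ Ω, Lop n hn ε u x = 0)
    (k : Fin (2*n)) :
    ∀ x ∈ Ω,
      ∑ i : Fin (2*n), ∑ j : Fin (2*n),
        Xop n hn ε u i
          (fun y =>
            aCoef (fun l => Xop n hn ε u l u y) i j / Real.sqrt (1 + gradSq n hn ε u u y)
              * Xop n hn ε u j (fun w => Xop n hn ε u k u w) y) x
      = - (∑ i : Fin (2*n),
            (Xop n hn ε u k
              (fun y => Xop n hn ε u i
                (fun w => Xop n hn ε u i u w / Real.sqrt (1 + gradSq n hn ε u u w)) y) x
            - Xop n hn ε u i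
              (fun y => Xop n hn ε u k
                (fun w => Xop n hn ε u i u w / Real.sqrt (1 + gradSq n hn ε u u w)) y) x))
        - ∑ i : Fin (2*n), ∑ j : Fin (2*n),
            Xop n hn ε u i
              (fun y =>
                aCoef (fun l => Xop n hn ε u l u y) i j
                  / Real.sqrt (1 + gradSq n hn ε u u y)
                  * (Xop n hn ε u k (fun w => Xop n hn ε u j u w) y
                      - Xop n hn ε u j (fun w => Xop n hn ε u k u w) y)) x := by
  intro x hx
  rw [Finset.sum_sub_distrib, sum_Xop_Xop_div_sqrt_eq_zero hu hΩ hsol k hx]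
  simp only [Xop_Xop_div_sqrt_one_add_gradSq hu, Finset.sum_add_distrib]
  ring

/-- If `u` is `C³` with bounded intrinsic gradient and solves `L_ε u = 0` in `Ω`,
then for `k ≤ 2n-1` (1-based), `z = X^ε_{k,u}u` solves
`Σ_{i,j} X^ε_{i,u}( (a_{ij}(∇^ε_u u)/√(1+|∇^ε_u u|²)) X^ε_{j,u} z )
  = -Σ_i [X^ε_{k,u},X^ε_{i,u}]( X^ε_{i,u}u/√(1+|∇^ε_u u|²) )
    -Σ_{i,j} X^ε_{i,u}( (a_{ij}(∇^ε_u u)/√(1+|∇^ε_u u|²)) [X^ε_{k,u},X^ε_{j,u}]u )` in `Ω`. -/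
theorem stmt11 {n : ℕ} (hn : 1 ≤ n) (ε : ℝ) (hε : 0 < ε)
    (Ω : Set (EuclideanSpace ℝ (Fin (2*n)))) (hΩ : IsOpen Ω)
    (u : EuclideanSpace ℝ (Fin (2*n)) → ℝ) (hu : ContDiff ℝ 3 u)
    (hbd : ∃ M : ℝ, ∀ x, ∀ i : Fin (2*n), |Xop n hn ε u i u x| ≤ M)
    (hsol : ∀ x ∈ Ω, Lop n hn ε u x = 0)
    (k : Fin (2*n)) (hk : (k : ℕ) < 2*n - 1) :
    ∀ x ∈ Ω,
      ∑ i : Fin (2*n), ∑ j : Fin (2*n),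
        Xop n hn ε u i
          (fun y =>
            aCoef (fun l => Xop n hn ε u l u y) i j / Real.sqrt (1 + gradSq n hn ε u u y)
              * Xop n hn ε u j (fun w => Xop n hn ε u k u w) y) x
      = - (∑ i : Fin (2*n),
            (Xop n hn ε u k
              (fun y => Xop n hn ε u i
                (fun w => Xop n hn ε u i u w / Real.sqrt (1 + gradSq n hn ε u u w)) y) x
            - Xop n hn ε u i
              (fun y => Xop n hn ε u k
                (fun w => Xop n hn ε u i u w / Real.sqrt (1 + gradSq n hn ε u u w)) y) x))
        - ∑ i : Fin (2*n), ∑ j : Fin (2*n),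
            Xop n hn ε u i
              (fun y =>
                aCoef (fun l => Xop n hn ε u l u y) i j
                  / Real.sqrt (1 + gradSq n hn ε u u y)
                  * (Xop n hn ε u k (fun w => Xop n hn ε u j u w) y
                      - Xop n hn ε u j (fun w => Xop n hn ε u k u w) y)) x :=
  stmt11_general hn ε Ω hΩ u hu hsol k
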